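/- arXiv:1809.01812 — 8 statements merged into one kernel-verified Lean document; each statement's English description precedes it below -/
import Mathlib

section
/- If for all (x, y_0, ..., y_K) and all i ∈ {0,...,K} the softmax posterior probabilities agree, q(i|x, y_{0:K}; θ_1) = q(i|x, y_{0:K}; θ_2), then there exists a function c : X → ℝ such that s(x,y;θ_1) - s(x,y;θ_2) = c(x) for all x, y. -/
/-- If the ranking softmax posteriors agree for all tuples and indices,
then the two scoring functions differ by a function of `x` only. -/
theorem softmax_posterior_eq_implies_shift (X Y : Type) [Nonempty Y] (K : ℕ) (hK : 1 ≤ K)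
    (Θ : Type) (θ₁ θ₂ : Θ)
    (pN : Y → ℝ) (hpN : ∀ y, 0 < pN y)
    (s : X → Y → Θ → ℝ)
    (sb : X → Y → Θ → ℝ) (hsb : ∀ x y θ, sb x y θ = s x y θ - Real.log (pN y))
    (hq : ∀ (x : X) (ys : Fin (K + 1) → Y) (i : Fin (K + 1)),
      Real.exp (sb x (ys i) θ₁) / (∑ j, Real.exp (sb x (ys j) θ₁))
        = Real.exp (sb x (ys i) θ₂) / (∑ j, Real.exp (sb x (ys j) θ₂))) :
    ∃ c : X → ℝ, ∀ x y, s x y θ₁ - s x y θ₂ = c x := by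
  obtain ⟨y₀⟩ := ‹Nonempty Y›
  refine ⟨fun x => s x y₀ θ₁ - s x y₀ θ₂, fun x y => ?_⟩
  set ys : Fin (K + 1) → Y := fun j => if j = 0 then y else y₀ with hys
  have h01 : (1 : Fin (K + 1)) ≠ 0 := by
    have : (1 : ℕ) < K + 1 := by omega
    simp [Fin.ext_iff, Nat.mod_eq_of_lt this]
  have hys0 : ys 0 = y := by simp [hys]
  have hys1 : ys 1 = y₀ := by simp [hys, h01]
  have hS₁ : (0 : ℝ) < ∑ j, Real.exp (sb x (ys j) θ₁) :=
    Finset.sum_pos (fun j _ => Real.exp_pos _) ⟨0, Finset.mem_univ _⟩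
  have hS₂ : (0 : ℝ) < ∑ j, Real.exp (sb x (ys j) θ₂) :=
    Finset.sum_pos (fun j _ => Real.exp_pos _) ⟨0, Finset.mem_univ _⟩
  have h0 := hq x ys 0
  have h1 := hq x ys 1
  rw [hys0] at h0
  rw [hys1] at h1
  rw [div_eq_div_iff hS₁.ne' hS₂.ne'] at h0 h1
  have h3 : (Real.exp (sb x y θ₁) * ∑ j, Real.exp (sb x (ys j) θ₂))
      * (Real.exp (sb x y₀ θ₂) * ∑ j, Real.exp (sb x (ys j) θ₁))
      = (Real.exp (sb x y θ₂) * ∑ j, Real.exp (sb x (ys j) θ₁))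
      * (Real.exp (sb x y₀ θ₁) * ∑ j, Real.exp (sb x (ys j) θ₂)) := by
    rw [h0, h1]
  have h4 : (Real.exp (sb x y θ₁) * Real.exp (sb x y₀ θ₂))
      * ((∑ j, Real.exp (sb x (ys j) θ₂)) * (∑ j, Real.exp (sb x (ys j) θ₁)))
      = (Real.exp (sb x y θ₂) * Real.exp (sb x y₀ θ₁))
      * ((∑ j, Real.exp (sb x (ys j) θ₂)) * (∑ j, Real.exp (sb x (ys j) θ₁))) := by
    linear_combination h3
  have key := mul_right_cancel₀ (mul_pos hS₂ hS₁).ne' h4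
  rw [← Real.exp_add, ← Real.exp_add] at key
  have := Real.exp_injective key
  show s x y θ₁ - s x y θ₂ = s x y₀ θ₁ - s x y₀ θ₂
  have hsb1 := hsb x y θ₁
  have hsb2 := hsb x y θ₂
  have hsb3 := hsb x y₀ θ₁
  have hsb4 := hsb x y₀ θ₂
  linarith
end

section
/- If the normalized conditional distributions coincide for all x, y — i.e., p(y|x;θ_1) = p(y|x;θ_2) — then for all tuples (x, y_0, ..., y_K) and all i, the ranking softmax posteriors coincide: q(i|x, y_{0:K}; θ_1) = q(i|x, y_{0:K}; θ_2). -/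
/-!
Equal conditional distributions force `exp (s x · θ₁)` and `exp (s x · θ₂)` to be proportional,
with the ratio of the partition functions as constant. Dividing by the noise density and
restricting to the candidates `y₀, …, y_K` preserves proportionality, and normalisation
cancels the constant.
-/

open Finset

variable {𝕜 ι Y : Type*} [Field 𝕜] [Fintype ι] [Fintype Y]

theorem mul_div_sum_mul_left (w : ι → 𝕜) {c : 𝕜} (hc : c ≠ 0) (i : ι) :
    c * w i / ∑ j, c * w j = w i / ∑ j, w j := by
  rw [← mul_sum, mul_div_mul_left _ _ hc]

theorem eq_div_sum_mul_of_div_sum_eq {f g : Y → 𝕜} (hf : ∑ y, f y ≠ 0) (hg : ∑ y, g y ≠ 0)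
    (h : ∀ y, f y / ∑ y', f y' = g y / ∑ y', g y') (y : Y) :
    f y = (∑ y', f y') / (∑ y', g y') * g y := by
  have := h y
  field_simp at this ⊢
  linear_combination this

theorem div_div_sum_div_eq_of_div_sum_eq {f g : Y → 𝕜} (hf : ∑ y, f y ≠ 0)
    (hg : ∑ y, g y ≠ 0) (h : ∀ y, f y / ∑ y', f y' = g y / ∑ y', g y')
    (r : Y → 𝕜) (ys : ι → Y) (i : ι) :
    f (ys i) / r (ys i) / ∑ j, f (ys j) / r (ys j)
      = g (ys i) / r (ys i) / ∑ j, g (ys j) / r (ys j) := by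
  obtain ⟨c, hc, hfg⟩ : ∃ c ≠ 0, ∀ y, f y = c * g y :=
    ⟨_, div_ne_zero hf hg, eq_div_sum_mul_of_div_sum_eq hf hg h⟩
  simp only [hfg, mul_div_assoc]
  rw [← mul_div_assoc]
  exact mul_div_sum_mul_left (fun j => g (ys j) / r (ys j)) hc i

theorem cond_dist_eq_implies_softmax_posterior_eq_general (X Y : Type) [Fintype Y] (K : ℕ)
    (Θ : Type) (θ₁ θ₂ : Θ)
    (pN : Y → ℝ)
    (s : X → Y → Θ → ℝ)
    (sb : X → Y → Θ → ℝ) (hsb : ∀ x y θ, sb x y θ = s x y θ - Real.log (pN y))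
    (hp : ∀ x y, Real.exp (s x y θ₁) / (∑ y', Real.exp (s x y' θ₁))
      = Real.exp (s x y θ₂) / (∑ y', Real.exp (s x y' θ₂))) :
    ∀ (x : X) (ys : Fin (K + 1) → Y) (i : Fin (K + 1)),
      Real.exp (sb x (ys i) θ₁) / (∑ j, Real.exp (sb x (ys j) θ₁))
        = Real.exp (sb x (ys i) θ₂) / (∑ j, Real.exp (sb x (ys j) θ₂)) := by
  intro x ys i
  have hZ : ∀ θ, ∑ y, Real.exp (s x y θ) ≠ 0 := fun θ =>
    (sum_pos (fun _ _ => Real.exp_pos _) ⟨ys i, mem_univ _⟩).ne'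
  simp only [hsb, Real.exp_sub]
  exact div_div_sum_div_eq_of_div_sum_eq (hZ θ₁) (hZ θ₂) (hp x)
    (fun y => Real.exp (Real.log (pN y))) ys i

/-- If the normalized conditional distributions coincide, then all the
ranking softmax posteriors coincide. -/
theorem cond_dist_eq_implies_softmax_posterior_eq (X Y : Type) [Fintype Y] (K : ℕ)
    (Θ : Type) (θ₁ θ₂ : Θ)
    (pN : Y → ℝ) (hpN : ∀ y, 0 < pN y)
    (s : X → Y → Θ → ℝ)
    (sb : X → Y → Θ → ℝ) (hsb : ∀ x y θ, sb x y θ = s x y θ - Real.log (pN y))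
    (hp : ∀ x y, Real.exp (s x y θ₁) / (∑ y', Real.exp (s x y' θ₁))
      = Real.exp (s x y θ₂) / (∑ y', Real.exp (s x y' θ₂))) :
    ∀ (x : X) (ys : Fin (K + 1) → Y) (i : Fin (K + 1)),
      Real.exp (sb x (ys i) θ₁) / (∑ j, Real.exp (sb x (ys j) θ₁))
        = Real.exp (sb x (ys i) θ₂) / (∑ j, Real.exp (sb x (ys j) θ₂)) :=
  cond_dist_eq_implies_softmax_posterior_eq_general X Y K Θ θ₁ θ₂ pN s sb hsb hp
end

section
/- The population ranking objective satisfies the symmetrization identity: for each fixed i ∈ {0,...,K}, Σ_x Σ_{y_0,...,y_K} p_{X,Y}(x,y_i)·∏_{j≠i} p_N(y_j)·log q(i|x,y_{0:K};θ) is independent of i, and hence L_R^∞(θ) = (1/(K+1))·Σ_x Σ_{y_{0:K}} α(x,y_{0:K})·Σ_{i=0}^K β(i|x,y_{0:K})·log q(i|x,y_{0:K};θ), where α(x,y_{0:K}) = Σ_{i=0}^K p_{X,Y}(x,y_i)∏_{j≠i}p_N(y_j) and β(i|x,y_{0:K}) = p_{X,Y}(x,y_i)∏_{j≠i}p_N(y_j)/α(x,y_{0:K}).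 -/
/-! Relabelling the candidates `y₀, …, y_K` by the transposition `(i i')` is a bijection of
`Y^{K+1}` that carries the weight `p_{X,Y}(x, y_i) ∏_{j ≠ i} p_N(y_j)` and the softmax probability
`q(i | x, y_{0:K})` to their counterparts at `i'`, so all `K + 1` terms agree. The `i = 0` term is
therefore their average, which is the symmetrized form once `α · β(i | ·)` is recognised as the
`i`-th weight; this needs `α > 0`, which is where positivity of the distributions enters. -/

open Finset

section Relabelling

variable {ι : Type*} [Fintype ι] [DecidableEq ι]

theorem Finset.prod_erase_comp_perm {M : Type*} [CommMonoid M] (f : ι → M) (σ : Equiv.Perm ι)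
    (i : ι) : ∏ j ∈ univ.erase i, f (σ j) = ∏ j ∈ univ.erase (σ i), f j :=
  prod_equiv σ (by simp [σ.injective.eq_iff]) (fun _ _ => rfl)

theorem Fintype.sum_pi_eq_of_comp_perm {Y M : Type*} [Fintype Y] [AddCommMonoid M]
    {G : ι → (ι → Y) → M} (hG : ∀ (σ : Equiv.Perm ι) i ys, G i (ys ∘ σ) = G (σ i) ys)
    (i i' : ι) : ∑ ys, G i ys = ∑ ys, G i' ys := by
  let relabel : (ι → Y) ≃ (ι → Y) := (Equiv.swap i i').symm.arrowCongr (Equiv.refl Y)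
  calc ∑ ys, G i ys = ∑ ys, G i (relabel ys) := (relabel.sum_comp (G i)).symm
    _ = ∑ ys, G i' ys := Finset.sum_congr rfl fun ys _ => by
      rw [← Equiv.swap_apply_left i i']
      exact hG _ i ys

end Relabelling

theorem Finset.mul_sum_div_mul {ι 𝕜 : Type*} [Field 𝕜] (s : Finset ι) {a : 𝕜} (ha : a ≠ 0)
    (b c : ι → 𝕜) :
    a * ∑ i ∈ s, b i / a * c i = ∑ i ∈ s, b i * c i := by
  rw [mul_sum]
  refine sum_congr rfl fun i _ => ?_
  field_simp

theorem ranking_objective_symmetrization_general (X Y : Type) [Fintype X] [Fintype Y] (K : ℕ)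
    (Θ : Type) (θ : Θ)
    (pXY : X → Y → ℝ) (hpXY : ∀ x y, 0 < pXY x y)
    (pN : Y → ℝ) (hpN : ∀ y, 0 < pN y)
    (sb : X → Y → Θ → ℝ)
    (q : Fin (K + 1) → X → (Fin (K + 1) → Y) → ℝ)
    (hq : ∀ i x ys, q i x ys
      = Real.exp (sb x (ys i) θ) / ∑ j, Real.exp (sb x (ys j) θ))
    (b : Fin (K + 1) → X → (Fin (K + 1) → Y) → ℝ)
    (hb : ∀ i x ys, b i x ys = pXY x (ys i) * ∏ j ∈ Finset.univ.erase i, pN (ys j))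
    (α : X → (Fin (K + 1) → Y) → ℝ)
    (hα : ∀ x ys, α x ys = ∑ i, b i x ys) :
    (∀ i i' : Fin (K + 1),
      (∑ x, ∑ ys : Fin (K + 1) → Y, b i x ys * Real.log (q i x ys))
        = ∑ x, ∑ ys : Fin (K + 1) → Y, b i' x ys * Real.log (q i' x ys)) ∧
    (∑ x, ∑ ys : Fin (K + 1) → Y, b 0 x ys * Real.log (q 0 x ys))
      = (1 / ((K : ℝ) + 1)) * ∑ x, ∑ ys : Fin (K + 1) → Y,
          α x ys * ∑ i, (b i x ys / α x ys) * Real.log (q i x ys) := by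
  set T : Fin (K + 1) → ℝ := fun i => ∑ x, ∑ ys, b i x ys * Real.log (q i x ys)
  have summand_comp_perm : ∀ x (σ : Equiv.Perm (Fin (K + 1))) i ys,
      b i x (ys ∘ σ) * Real.log (q i x (ys ∘ σ)) = b (σ i) x ys * Real.log (q (σ i) x ys) := by
    intro x σ i ys
    simp only [hb, hq, Function.comp_apply]
    rw [prod_erase_comp_perm (fun j => pN (ys j)),
      Equiv.sum_comp σ fun j => Real.exp (sb x (ys j) θ)]
  have hT : ∀ i i', T i = T i' := fun i i' =>
    sum_congr rfl fun x _ => Fintype.sum_pi_eq_of_comp_perm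
      (G := fun i ys => b i x ys * Real.log (q i x ys)) (summand_comp_perm x) i i'
  have hα_ne : ∀ x ys, α x ys ≠ 0 := fun x ys => by
    simp only [hα, hb]
    exact (sum_pos (fun i _ => mul_pos (hpXY _ _) (prod_pos fun j _ => hpN _))
      univ_nonempty).ne'
  refine ⟨hT, ?_⟩
  calc T 0 = (1 / ((K : ℝ) + 1)) * ∑ i, T i := by
        simp only [sum_congr rfl fun i _ => hT i 0, sum_const, card_univ, Fintype.card_fin]
        rw [nsmul_eq_mul]
        field_simp
        push_cast
        ring
    _ = _ := by
        simp only [T, mul_sum_div_mul _ (hα_ne _ _)]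
        rw [sum_comm]
        simp only [sum_comm (γ := Fin (K + 1))]

/-- Symmetrization identity for the population ranking objective: each term
`∑ₓ ∑_{y₀:K} p_{X,Y}(x,yᵢ) ∏_{j≠i} p_N(y_j) log q(i|x,y₀:K;θ)` is independent of `i`,
and hence the population ranking objective equals
`(1/(K+1)) ∑ₓ ∑_{y₀:K} α(x,y₀:K) ∑ᵢ β(i|x,y₀:K) log q(i|x,y₀:K;θ)`. -/
theorem ranking_objective_symmetrization (X Y : Type) [Fintype X] [Fintype Y] (K : ℕ)
    (Θ : Type) (θ : Θ)
    (pXY : X → Y → ℝ) (hpXY : ∀ x y, 0 < pXY x y)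
    (pN : Y → ℝ) (hpN : ∀ y, 0 < pN y)
    (s : X → Y → Θ → ℝ)
    (sb : X → Y → Θ → ℝ) (hsb : ∀ x y θ', sb x y θ' = s x y θ' - Real.log (pN y))
    (q : Fin (K + 1) → X → (Fin (K + 1) → Y) → ℝ)
    (hq : ∀ i x ys, q i x ys
      = Real.exp (sb x (ys i) θ) / ∑ j, Real.exp (sb x (ys j) θ))
    (b : Fin (K + 1) → X → (Fin (K + 1) → Y) → ℝ)
    (hb : ∀ i x ys, b i x ys = pXY x (ys i) * ∏ j ∈ Finset.univ.erase i, pN (ys j))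
    (α : X → (Fin (K + 1) → Y) → ℝ)
    (hα : ∀ x ys, α x ys = ∑ i, b i x ys) :
    (∀ i i' : Fin (K + 1),
      (∑ x, ∑ ys : Fin (K + 1) → Y, b i x ys * Real.log (q i x ys))
        = ∑ x, ∑ ys : Fin (K + 1) → Y, b i' x ys * Real.log (q i' x ys)) ∧
    (∑ x, ∑ ys : Fin (K + 1) → Y, b 0 x ys * Real.log (q 0 x ys))
      = (1 / ((K : ℝ) + 1)) * ∑ x, ∑ ys : Fin (K + 1) → Y,
          α x ys * ∑ i, (b i x ys / α x ys) * Real.log (q i x ys) :=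
  ranking_objective_symmetrization_general X Y K Θ θ pXY hpXY pN hpN sb q hq b hb α hα
end

section
/- Under the true-model assumption (conditional distribution equals softmax of scores at θ*), θ* maximizes the population ranking objective L_R^∞(θ) over all θ. -/
open Finset

private lemma swap_sum {Y : Type} [Fintype Y] {n : ℕ} (j : Fin (n + 1))
    (p f g : Y → ℝ) :
    ∑ ys : Fin (n + 1) → Y, (∏ k, p (ys k)) * (f (ys j) * (g (ys 0) / ∑ k, g (ys k)))
      = ∑ ys : Fin (n + 1) → Y, (∏ k, p (ys k)) * (f (ys 0) * (g (ys j) / ∑ k, g (ys k))) := by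
  refine Fintype.sum_equiv
    (Equiv.arrowCongr (Equiv.swap (0 : Fin (n + 1)) j) (Equiv.refl Y)) _ _ ?_
  intro ys
  have he : ∀ k, (Equiv.arrowCongr (Equiv.swap (0 : Fin (n + 1)) j) (Equiv.refl Y)) ys k
      = ys (Equiv.swap (0 : Fin (n + 1)) j k) := by
    intro k; simp [Equiv.arrowCongr]
  simp only [he, Equiv.swap_apply_left, Equiv.swap_apply_right]
  rw [Equiv.prod_comp (Equiv.swap (0 : Fin (n + 1)) j) (fun k => p (ys k)),
      Equiv.sum_comp (Equiv.swap (0 : Fin (n + 1)) j) (fun k => g (ys k))]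

private lemma inner_ineq {Y : Type} [Fintype Y] {n : ℕ}
    (pN a b : Y → ℝ) (hpN : ∀ y, 0 < pN y) (ha : ∀ y, 0 < a y) (hb : ∀ y, 0 < b y)
    (c : ℝ) (hc : 0 < c) :
    ∑ ys : Fin (n + 1) → Y,
        (c * ((∏ k, pN (ys k)) * a (ys 0))) * Real.log (b (ys 0) / ∑ k, b (ys k))
      ≤ ∑ ys : Fin (n + 1) → Y,
        (c * ((∏ k, pN (ys k)) * a (ys 0))) * Real.log (a (ys 0) / ∑ k, a (ys k)) := by
  set P : (Fin (n + 1) → Y) → ℝ := fun ys => c * ((∏ k, pN (ys k)) * a (ys 0)) with hPdef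
  set Q : (Fin (n + 1) → Y) → ℝ :=
    fun ys => c * ((∏ k, pN (ys k)) * ((∑ k, a (ys k)) * (b (ys 0) / ∑ k, b (ys k)))) with hQdef
  have hprod : ∀ ys : Fin (n + 1) → Y, 0 < ∏ k, pN (ys k) :=
    fun ys => Finset.prod_pos fun k _ => hpN _
  have hsa : ∀ ys : Fin (n + 1) → Y, 0 < ∑ k, a (ys k) :=
    fun ys => Finset.sum_pos (fun k _ => ha _) ⟨0, Finset.mem_univ 0⟩
  have hsb : ∀ ys : Fin (n + 1) → Y, 0 < ∑ k, b (ys k) :=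
    fun ys => Finset.sum_pos (fun k _ => hb _) ⟨0, Finset.mem_univ 0⟩
  have hPpos : ∀ ys, 0 < P ys := fun ys =>
    mul_pos hc (mul_pos (hprod ys) (ha _))
  have hQpos : ∀ ys, 0 < Q ys := fun ys =>
    mul_pos hc (mul_pos (hprod ys) (mul_pos (hsa ys) (div_pos (hb _) (hsb ys))))
  have key : ∀ ys : Fin (n + 1) → Y,
      P ys * Real.log (b (ys 0) / ∑ k, b (ys k))
        ≤ P ys * Real.log (a (ys 0) / ∑ k, a (ys k)) + (Q ys - P ys) := by
    intro ys
    have hratio : Q ys / P ys = (b (ys 0) / ∑ k, b (ys k)) / (a (ys 0) / ∑ k, a (ys k)) := by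
      rw [hPdef, hQdef]
      have h1 := (hprod ys).ne'
      have h2 := (ha (ys 0)).ne'
      have h3 := (hsa ys).ne'
      have h4 := (hsb ys).ne'
      field_simp
    have hlog : Real.log (Q ys / P ys)
        = Real.log (b (ys 0) / ∑ k, b (ys k)) - Real.log (a (ys 0) / ∑ k, a (ys k)) := by
      rw [hratio, Real.log_div (div_pos (hb _) (hsb ys)).ne' (div_pos (ha _) (hsa ys)).ne']
    have h1 : Real.log (Q ys / P ys) ≤ Q ys / P ys - 1 :=
      Real.log_le_sub_one_of_pos (div_pos (hQpos ys) (hPpos ys))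
    have h2 : P ys * (Q ys / P ys - 1) = Q ys - P ys := by
      rw [mul_sub, mul_one, mul_div_cancel₀ _ (hPpos ys).ne']
    have h3 := mul_le_mul_of_nonneg_left h1 (hPpos ys).le
    have h4 : P ys * Real.log (b (ys 0) / ∑ k, b (ys k))
        = P ys * Real.log (a (ys 0) / ∑ k, a (ys k)) + P ys * Real.log (Q ys / P ys) := by
      rw [hlog]; ring
    linarith
  have hQP : ∑ ys : Fin (n + 1) → Y, Q ys = ∑ ys : Fin (n + 1) → Y, P ys := by
    calc ∑ ys : Fin (n + 1) → Y, Q ys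
        = ∑ ys : Fin (n + 1) → Y, ∑ j : Fin (n + 1),
            (∏ k, pN (ys k)) * (a (ys j) * (b (ys 0) / ∑ k, b (ys k))) * c := by
          refine Finset.sum_congr rfl fun ys _ => ?_
          simp only [hQdef]
          rw [Finset.sum_mul, Finset.mul_sum, Finset.mul_sum]
          exact Finset.sum_congr rfl fun j _ => by ring
      _ = ∑ j : Fin (n + 1), (∑ ys : Fin (n + 1) → Y,
            (∏ k, pN (ys k)) * (a (ys j) * (b (ys 0) / ∑ k, b (ys k)))) * c := by
          rw [Finset.sum_comm]
          exact Finset.sum_congr rfl fun j _ => by rw [Finset.sum_mul]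
      _ = ∑ j : Fin (n + 1), (∑ ys : Fin (n + 1) → Y,
            (∏ k, pN (ys k)) * (a (ys 0) * (b (ys j) / ∑ k, b (ys k)))) * c := by
          exact Finset.sum_congr rfl fun j _ => by rw [swap_sum j pN a b]
      _ = ∑ ys : Fin (n + 1) → Y, ∑ j : Fin (n + 1),
            (∏ k, pN (ys k)) * (a (ys 0) * (b (ys j) / ∑ k, b (ys k))) * c := by
          rw [Finset.sum_comm]
          exact Finset.sum_congr rfl fun ys _ => by rw [Finset.sum_mul]
      _ = ∑ ys : Fin (n + 1) → Y, P ys := by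
          refine Finset.sum_congr rfl fun ys _ => ?_
          have : ∑ j : Fin (n + 1),
              (∏ k, pN (ys k)) * (a (ys 0) * (b (ys j) / ∑ k, b (ys k))) * c
            = (∏ k, pN (ys k)) * (a (ys 0) * ((∑ j, b (ys j)) / ∑ k, b (ys k))) * c := by
            rw [Finset.sum_div, Finset.mul_sum, Finset.mul_sum, Finset.sum_mul]
          rw [this, div_self (hsb ys).ne']
          simp only [hPdef]
          ring
  calc ∑ ys : Fin (n + 1) → Y, P ys * Real.log (b (ys 0) / ∑ k, b (ys k))
      ≤ ∑ ys : Fin (n + 1) → Y,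
          (P ys * Real.log (a (ys 0) / ∑ k, a (ys k)) + (Q ys - P ys)) :=
        Finset.sum_le_sum fun ys _ => key ys
    _ = ∑ ys : Fin (n + 1) → Y, P ys * Real.log (a (ys 0) / ∑ k, a (ys k))
          + ((∑ ys : Fin (n + 1) → Y, Q ys) - ∑ ys : Fin (n + 1) → Y, P ys) := by
        rw [Finset.sum_add_distrib, Finset.sum_sub_distrib]
    _ = ∑ ys : Fin (n + 1) → Y, P ys * Real.log (a (ys 0) / ∑ k, a (ys k)) := by
        rw [hQP]; ring

/-- Under the true-model assumption (the conditional distribution is the softmax of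
the scores at `θ*`), `θ*` maximizes the population ranking objective. -/
theorem ranking_objective_max_at_true_param (X Y : Type) [Fintype X] [Fintype Y]
    (K : ℕ) (hK : 1 ≤ K)
    (Θ : Type) (θs : Θ)
    (pX : X → ℝ) (hpX : ∀ x, 0 < pX x) (hpXsum : ∑ x, pX x = 1)
    (pN : Y → ℝ) (hpN : ∀ y, 0 < pN y) (hpNsum : ∑ y, pN y = 1)
    (s : X → Y → Θ → ℝ)
    (pXY : X → Y → ℝ)
    (hmodel : ∀ x y, pXY x y
      = pX x * (Real.exp (s x y θs) / ∑ y', Real.exp (s x y' θs)))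
    (sb : X → Y → Θ → ℝ) (hsb : ∀ x y θ, sb x y θ = s x y θ - Real.log (pN y))
    (L : Θ → ℝ)
    (hL : ∀ θ, L θ = ∑ x, ∑ ys : Fin (K + 1) → Y,
      (pXY x (ys 0) * ∏ j ∈ Finset.univ.erase 0, pN (ys j)) *
        Real.log (Real.exp (sb x (ys 0) θ) / ∑ k, Real.exp (sb x (ys k) θ))) :
    ∀ θ, L θ ≤ L θs := by
  have hYne : Nonempty Y := by
    by_contra h
    haveI := not_nonempty_iff.mp h
    simp at hpNsum
  intro θ
  rw [hL θ, hL θs]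
  refine Finset.sum_le_sum fun x _ => ?_
  have hZpos : 0 < ∑ y', Real.exp (s x y' θs) :=
    Finset.sum_pos (fun y _ => Real.exp_pos _) Finset.univ_nonempty
  have haeq : ∀ y, Real.exp (sb x y θs) = Real.exp (s x y θs) / pN y := by
    intro y; rw [hsb, Real.exp_sub, Real.exp_log (hpN y)]
  have hP : ∀ ys : Fin (K + 1) → Y,
      pXY x (ys 0) * ∏ j ∈ Finset.univ.erase 0, pN (ys j)
        = (pX x / ∑ y', Real.exp (s x y' θs))
            * ((∏ k, pN (ys k)) * (Real.exp (s x (ys 0) θs) / pN (ys 0))) := by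
    intro ys
    rw [hmodel,
      ← Finset.mul_prod_erase Finset.univ (fun k => pN (ys k)) (Finset.mem_univ 0)]
    have h1 := (hpN (ys 0)).ne'
    have h2 := hZpos.ne'
    field_simp
  have lhs_eq : (∑ ys : Fin (K + 1) → Y,
        (pXY x (ys 0) * ∏ j ∈ Finset.univ.erase 0, pN (ys j)) *
          Real.log (Real.exp (sb x (ys 0) θ) / ∑ k, Real.exp (sb x (ys k) θ)))
      = ∑ ys : Fin (K + 1) → Y,
        ((pX x / ∑ y', Real.exp (s x y' θs))
            * ((∏ k, pN (ys k)) * (Real.exp (s x (ys 0) θs) / pN (ys 0)))) *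
          Real.log (Real.exp (sb x (ys 0) θ) / ∑ k, Real.exp (sb x (ys k) θ)) :=
    Finset.sum_congr rfl fun ys _ => by rw [hP ys]
  have rhs_eq : (∑ ys : Fin (K + 1) → Y,
        (pXY x (ys 0) * ∏ j ∈ Finset.univ.erase 0, pN (ys j)) *
          Real.log (Real.exp (sb x (ys 0) θs) / ∑ k, Real.exp (sb x (ys k) θs)))
      = ∑ ys : Fin (K + 1) → Y,
        ((pX x / ∑ y', Real.exp (s x y' θs))
            * ((∏ k, pN (ys k)) * (Real.exp (s x (ys 0) θs) / pN (ys 0)))) *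
          Real.log ((Real.exp (s x (ys 0) θs) / pN (ys 0))
            / ∑ k, Real.exp (s x (ys k) θs) / pN (ys k)) :=
    Finset.sum_congr rfl fun ys _ => by rw [hP ys]; simp only [haeq]
  rw [lhs_eq, rhs_eq]
  exact inner_ineq pN (fun y => Real.exp (s x y θs) / pN y)
    (fun y => Real.exp (sb x y θ)) hpN
    (fun y => div_pos (Real.exp_pos _) (hpN y)) (fun y => Real.exp_pos _)
    (pX x / ∑ y', Real.exp (s x y' θs)) (div_pos (hpX x) hZpos)
end

section
/- Under the true-model assumption, any maximizer θ̄ of the population ranking objective L_R^∞ satisfies exp(s(x,y;θ̄))/Z(x;θ̄) = p(y|x) for all x, y; that is, the ranking NCE population objective identifies the true conditional distribution. -/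
/-!
Fix `x` and put `g y = exp (sb x y θs)`, `f y = exp (sb x y θ)`. The data density is proportional
to `g * pN`, so `L θ` is a positive combination over `x` of ranking objectives `R(g, f)`. Under
`∏ pN` the tuple of candidates is exchangeable, so averaging over the slot that holds the data turns
`R(g, f)` into the expectation of `∑ₖ g(yₖ) log (f(yₖ) / ∑ⱼ f(yⱼ))`, which Gibbs' inequality bounds
by its value at `f = g`, with equality only if `f(yₖ) / ∑ f = g(yₖ) / ∑ g` on every tuple. Hence
`θs` maximizes `L`, every maximizer attains equality, and since for `K ≥ 1` a tuple can contain any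
two labels, `f` is proportional to `g`.
-/

open Finset Real

lemma mul_log_le_mul_log_add_mul_sub {a p q : ℝ} (ha : 0 < a) (hp : 0 < p) (hq : 0 < q) :
    a * log q ≤ a * log p + a / p * (q - p) := by
  have h := log_le_sub_one_of_pos (div_pos hq hp)
  rw [log_div hq.ne' hp.ne'] at h
  have : a * (log q - log p) ≤ a * (q / p - 1) := mul_le_mul_of_nonneg_left h ha.le
  field_simp at this ⊢
  linarith

lemma mul_log_lt_mul_log_add_mul_sub {a p q : ℝ} (ha : 0 < a) (hp : 0 < p) (hq : 0 < q)
    (hpq : q ≠ p) : a * log q < a * log p + a / p * (q - p) := by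
  have h := log_lt_sub_one_of_pos (div_pos hq hp) (by rwa [Ne, div_eq_one_iff_eq hp.ne'])
  rw [log_div hq.ne' hp.ne'] at h
  have : a * (log q - log p) < a * (q / p - 1) := mul_lt_mul_of_pos_left h ha
  field_simp at this ⊢
  linarith

section Gibbs

variable {ι : Type*} [Fintype ι] {f g : ι → ℝ}

lemma sum_div_sum_sub_div_sum_eq_zero [Nonempty ι] (hf : ∀ k, 0 < f k) (hg : ∀ k, 0 < g k) :
    ∑ k, (∑ j, g j) * (f k / ∑ j, f j - g k / ∑ j, g j) = 0 := by
  have hF : 0 < ∑ j, f j := sum_pos (fun k _ ↦ hf k) univ_nonempty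
  have hG : 0 < ∑ j, g j := sum_pos (fun k _ ↦ hg k) univ_nonempty
  rw [← mul_sum, sum_sub_distrib, ← sum_div, ← sum_div, div_self hF.ne', div_self hG.ne',
    sub_self, mul_zero]

lemma mul_log_div_sum_le (hf : ∀ k, 0 < f k) (hg : ∀ k, 0 < g k) (k : ι) :
    g k * log (f k / ∑ j, f j) ≤
      g k * log (g k / ∑ j, g j) + (∑ j, g j) * (f k / ∑ j, f j - g k / ∑ j, g j) := by
  have : Nonempty ι := ⟨k⟩
  have hF : 0 < ∑ j, f j := sum_pos (fun k _ ↦ hf k) univ_nonempty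
  have hG : 0 < ∑ j, g j := sum_pos (fun k _ ↦ hg k) univ_nonempty
  simpa only [div_div_cancel₀ (hg k).ne'] using
    mul_log_le_mul_log_add_mul_sub (hg k) (div_pos (hg k) hG) (div_pos (hf k) hF)

theorem sum_mul_log_div_sum_le (hf : ∀ k, 0 < f k) (hg : ∀ k, 0 < g k) :
    ∑ k, g k * log (f k / ∑ j, f j) ≤ ∑ k, g k * log (g k / ∑ j, g j) := by
  cases isEmpty_or_nonempty ι
  · simp
  calc ∑ k, g k * log (f k / ∑ j, f j)
      ≤ ∑ k, (g k * log (g k / ∑ j, g j) + (∑ j, g j) * (f k / ∑ j, f j - g k / ∑ j, g j)) :=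
        sum_le_sum fun k _ ↦ mul_log_div_sum_le hf hg k
    _ = ∑ k, g k * log (g k / ∑ j, g j) := by
        rw [sum_add_distrib, sum_div_sum_sub_div_sum_eq_zero hf hg, add_zero]

theorem div_sum_eq_div_sum_of_sum_mul_log_div_sum_eq (hf : ∀ k, 0 < f k) (hg : ∀ k, 0 < g k)
    (h : ∑ k, g k * log (f k / ∑ j, f j) = ∑ k, g k * log (g k / ∑ j, g j)) (k : ι) :
    f k / ∑ j, f j = g k / ∑ j, g j := by
  have : Nonempty ι := ⟨k⟩
  by_contra hk
  have hG : 0 < ∑ j, g j := sum_pos (fun k _ ↦ hg k) univ_nonempty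
  have hF : 0 < ∑ j, f j := sum_pos (fun k _ ↦ hf k) univ_nonempty
  have hlt : ∑ k, g k * log (f k / ∑ j, f j) <
      ∑ k, (g k * log (g k / ∑ j, g j) + (∑ j, g j) * (f k / ∑ j, f j - g k / ∑ j, g j)) := by
    refine sum_lt_sum (fun k _ ↦ mul_log_div_sum_le hf hg k) ⟨k, mem_univ k, ?_⟩
    simpa only [div_div_cancel₀ (hg k).ne'] using
      mul_log_lt_mul_log_add_mul_sub (hg k) (div_pos (hg k) hG) (div_pos (hf k) hF) hk
  rw [sum_add_distrib, sum_div_sum_sub_div_sum_eq_zero hf hg, add_zero] at hlt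
  exact hlt.ne h

end Gibbs

section Ranking

variable {ι Y : Type*} [Fintype ι] [DecidableEq ι] [Fintype Y]

/-- Slot `i` holds the data sample, with density proportional to `g * w`; every other slot holds
noise with density `w`; `f` scores the candidates. -/
noncomputable def rankingObjective (w g f : Y → ℝ) (i : ι) : ℝ :=
  ∑ ys : ι → Y, (∏ k, w (ys k)) * (g (ys i) * log (f (ys i) / ∑ k, f (ys k)))

lemma sum_prod_mul_apply_eq_of_swap (w : Y → ℝ) (φ : Y → ℝ → ℝ) (f : Y → ℝ) (i j : ι) :
    ∑ ys : ι → Y, (∏ k, w (ys k)) * φ (ys i) (∑ k, f (ys k)) =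
      ∑ ys : ι → Y, (∏ k, w (ys k)) * φ (ys j) (∑ k, f (ys k)) := by
  rw [← (Equiv.arrowCongr (Equiv.swap i j) (Equiv.refl Y)).sum_comp]
  refine sum_congr rfl fun ys _ ↦ ?_
  simp only [Equiv.arrowCongr_apply, Equiv.coe_refl, Function.comp_apply, id,
    Equiv.symm_swap, Equiv.swap_apply_left]
  rw [Equiv.prod_comp (Equiv.swap i j) fun k ↦ w (ys k),
    Equiv.sum_comp (Equiv.swap i j) fun k ↦ f (ys k)]

lemma card_mul_rankingObjective (w g f : Y → ℝ) (i : ι) :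
    Fintype.card ι * rankingObjective w g f i =
      ∑ ys : ι → Y, (∏ k, w (ys k)) * ∑ k, g (ys k) * log (f (ys k) / ∑ j, f (ys j)) := by
  simp_rw [mul_sum]
  rw [sum_comm, ← nsmul_eq_mul, ← card_univ, ← sum_const]
  exact sum_congr rfl fun k _ ↦ sum_prod_mul_apply_eq_of_swap w
    (fun y F ↦ g y * log (f y / F)) f i k

theorem rankingObjective_le {w g f : Y → ℝ} (hw : ∀ y, 0 ≤ w y) (hf : ∀ y, 0 < f y)
    (hg : ∀ y, 0 < g y) (i : ι) :
    rankingObjective w g f i ≤ rankingObjective w g g i := by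
  have : Nonempty ι := ⟨i⟩
  refine le_of_mul_le_mul_left ?_ (Nat.cast_pos.2 Fintype.card_pos : (0 : ℝ) < Fintype.card ι)
  rw [card_mul_rankingObjective, card_mul_rankingObjective]
  exact sum_le_sum fun ys _ ↦ mul_le_mul_of_nonneg_left
    (sum_mul_log_div_sum_le (fun k ↦ hf (ys k)) (fun k ↦ hg (ys k)))
    (prod_nonneg fun k _ ↦ hw (ys k))

theorem mul_eq_mul_of_rankingObjective_eq [Nontrivial ι] {w g f : Y → ℝ} (hw : ∀ y, 0 < w y)
    (hf : ∀ y, 0 < f y) (hg : ∀ y, 0 < g y) {i : ι}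
    (h : rankingObjective w g f i = rankingObjective w g g i) (y y' : Y) :
    f y * g y' = f y' * g y := by
  have hcard := congrArg ((Fintype.card ι : ℝ) * ·) h
  simp only [card_mul_rankingObjective] at hcard
  rw [sum_eq_sum_iff_of_le fun ys _ ↦ mul_le_mul_of_nonneg_left
    (sum_mul_log_div_sum_le (fun k ↦ hf (ys k)) (fun k ↦ hg (ys k)))
    (prod_nonneg fun k _ ↦ (hw (ys k)).le)] at hcard
  obtain ⟨j, hji⟩ := exists_ne i
  set ys : ι → Y := Function.update (fun _ ↦ y') i y
  have hprop := div_sum_eq_div_sum_of_sum_mul_log_div_sum_eq (fun k ↦ hf (ys k))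
    (fun k ↦ hg (ys k)) (mul_left_cancel₀ (prod_pos fun k _ ↦ hw (ys k)).ne' (hcard ys (mem_univ _)))
  have hF : 0 < ∑ k, f (ys k) := sum_pos (fun k _ ↦ hf (ys k)) univ_nonempty
  have hG : 0 < ∑ k, g (ys k) := sum_pos (fun k _ ↦ hg (ys k)) univ_nonempty
  have hi := hprop i
  have hj := hprop j
  rw [div_eq_div_iff hF.ne' hG.ne'] at hi hj
  simp only [ys, Function.update_self, Function.update_of_ne hji] at hi hj
  have : (f y * g y' - f y' * g y) * ∑ k, g (ys k) = 0 := by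
    linear_combination g y' * hi - g y * hj
  exact sub_eq_zero.1 ((mul_eq_zero.1 this).resolve_right hG.ne')

end Ranking

lemma div_sum_eq_div_sum_of_mul_eq_mul {Y : Type*} [Fintype Y] {a b : Y → ℝ}
    (hab : ∀ y y', a y * b y' = a y' * b y) (ha : ∑ y, a y ≠ 0) (hb : ∑ y, b y ≠ 0) (y : Y) :
    a y / ∑ y', a y' = b y / ∑ y', b y' := by
  rw [div_eq_div_iff ha hb, mul_sum, mul_sum]
  exact sum_congr rfl fun y' _ ↦ by rw [hab, mul_comm]

theorem ranking_objective_maximizer_consistent_general (X Y : Type) [Fintype X] [Fintype Y]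
    (K : ℕ) (hK : 1 ≤ K)
    (Θ : Type) (θs : Θ)
    (pX : X → ℝ) (hpX : ∀ x, 0 < pX x)
    (pN : Y → ℝ) (hpN : ∀ y, 0 < pN y)
    (s : X → Y → Θ → ℝ)
    (pXY : X → Y → ℝ)
    (hmodel : ∀ x y, pXY x y
      = pX x * (Real.exp (s x y θs) / ∑ y', Real.exp (s x y' θs)))
    (sb : X → Y → Θ → ℝ) (hsb : ∀ x y θ, sb x y θ = s x y θ - Real.log (pN y))
    (L : Θ → ℝ)
    (hL : ∀ θ, L θ = ∑ x, ∑ ys : Fin (K + 1) → Y,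
      (pXY x (ys 0) * ∏ j ∈ Finset.univ.erase 0, pN (ys j)) *
        Real.log (Real.exp (sb x (ys 0) θ) / ∑ k, Real.exp (sb x (ys k) θ)))
    (θb : Θ) (hmax : ∀ θ, L θ ≤ L θb) :
    ∀ x y, Real.exp (s x y θb) / (∑ y', Real.exp (s x y' θb))
      = Real.exp (s x y θs) / (∑ y', Real.exp (s x y' θs)) := by
  intro x₀ y₀
  have : Nonempty Y := ⟨y₀⟩
  have : Nontrivial (Fin (K + 1)) := Fin.nontrivial_iff_two_le.2 (by omega)
  have hZ : ∀ x θ, 0 < ∑ y, exp (s x y θ) := fun x θ ↦ sum_pos (fun y _ ↦ exp_pos _) univ_nonempty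
  set c : X → ℝ := fun x ↦ pX x / ∑ y, exp (s x y θs)
  set R : X → Θ → ℝ := fun x θ ↦
    rankingObjective pN (fun y ↦ exp (sb x y θs)) (fun y ↦ exp (sb x y θ)) (0 : Fin (K + 1))
  have hLR : ∀ θ, L θ = ∑ x, c x * R x θ := by
    intro θ
    rw [hL]
    refine sum_congr rfl fun x _ ↦ ?_
    simp only [R, rankingObjective, mul_sum]
    refine sum_congr rfl fun ys _ ↦ ?_
    have hdata : pXY x (ys 0) = c x * (exp (sb x (ys 0) θs) * pN (ys 0)) := by
      rw [hmodel, hsb, exp_sub, exp_log (hpN _)]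
      have := (hZ x θs).ne'
      have := (hpN (ys 0)).ne'
      simp only [c]
      field_simp
    rw [hdata, ← mul_prod_erase univ (fun j ↦ pN (ys j)) (mem_univ 0)]
    ring
  have hR_le : ∀ x θ, R x θ ≤ R x θs := fun x θ ↦
    rankingObjective_le (fun y ↦ (hpN y).le) (fun y ↦ exp_pos _) (fun y ↦ exp_pos _) 0
  have hc : ∀ x, 0 < c x := fun x ↦ div_pos (hpX x) (hZ x θs)
  have hR_eq : R x₀ θb = R x₀ θs := by
    have hle : ∀ x ∈ univ, c x * R x θb ≤ c x * R x θs :=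
      fun x _ ↦ mul_le_mul_of_nonneg_left (hR_le x θb) (hc x).le
    have hθs_le : ∑ x, c x * R x θs ≤ ∑ x, c x * R x θb := by simpa only [hLR] using hmax θs
    have := (sum_eq_sum_iff_of_le hle).1 (hθs_le.antisymm' (sum_le_sum hle))
    exact mul_left_cancel₀ (hc x₀).ne' (this x₀ (mem_univ x₀))
  refine div_sum_eq_div_sum_of_mul_eq_mul (fun y y' ↦ ?_) (hZ x₀ θb).ne' (hZ x₀ θs).ne' y₀
  have := mul_eq_mul_of_rankingObjective_eq hpN (fun y ↦ exp_pos _) (fun y ↦ exp_pos _) hR_eq y y'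
  simp only [hsb, exp_sub, exp_log (hpN _)] at this
  field_simp at this
  exact (div_left_inj' (mul_pos (hpN y) (hpN y')).ne').1 this

/-- Under the true-model assumption, any maximizer `θ̄` of the population ranking
objective recovers the true conditional distribution:
`exp(s(x,y;θ̄))/Z(x;θ̄) = p(y|x)` for all `x, y`. -/
theorem ranking_objective_maximizer_consistent (X Y : Type) [Fintype X] [Fintype Y]
    (K : ℕ) (hK : 1 ≤ K)
    (Θ : Type) (θs : Θ)
    (pX : X → ℝ) (hpX : ∀ x, 0 < pX x) (hpXsum : ∑ x, pX x = 1)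
    (pN : Y → ℝ) (hpN : ∀ y, 0 < pN y) (hpNsum : ∑ y, pN y = 1)
    (s : X → Y → Θ → ℝ)
    (pXY : X → Y → ℝ)
    (hmodel : ∀ x y, pXY x y
      = pX x * (Real.exp (s x y θs) / ∑ y', Real.exp (s x y' θs)))
    (sb : X → Y → Θ → ℝ) (hsb : ∀ x y θ, sb x y θ = s x y θ - Real.log (pN y))
    (L : Θ → ℝ)
    (hL : ∀ θ, L θ = ∑ x, ∑ ys : Fin (K + 1) → Y,
      (pXY x (ys 0) * ∏ j ∈ Finset.univ.erase 0, pN (ys j)) *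
        Real.log (Real.exp (sb x (ys 0) θ) / ∑ k, Real.exp (sb x (ys k) θ)))
    (θb : Θ) (hmax : ∀ θ, L θ ≤ L θb) :
    ∀ x y, Real.exp (s x y θb) / (∑ y', Real.exp (s x y' θb))
      = Real.exp (s x y θs) / (∑ y', Real.exp (s x y' θs)) :=
  ranking_objective_maximizer_consistent_general X Y K hK Θ θs pX hpX pN hpN s pXY hmodel sb hsb L
    hL θb hmax
end

section
/- Under self-normalization (p(y|x) = exp(s(x,y;θ*)-γ*)), the pair (θ*,γ*) maximizes the population binary objective L_B^∞(θ,γ) = Σ_{x,y} [p_{X,Y}(x,y) log g(x,y;θ,γ) + K·p_X(x)p_N(y) log(1-g(x,y;θ,γ))], and any maximizer (θ̄,γ̄) satisfies exp(s(x,y;θ̄)-γ̄) = p(y|x) for all x, y. -/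
/-! For each pair `(x, y)` the summand of the binary objective has the form
`a log t + b log (1 - t)` with `a = p(x,y) > 0`, `b = K p(x) p_N(y) > 0` and `t = g(x,y;θ,γ) ∈ (0,1)`.
By `log z ≤ z - 1` (strict unless `z = 1`) this is uniquely maximized at `t = a / (a + b)`,
and under self-normalization `g(x,y;θ*,γ*)` is exactly this value. Hence `(θ*,γ*)` maximizes
every summand, and a maximizer of the sum must attain `t = a / (a + b)` in every summand;
since `u ↦ u / (u + K)` is injective, this pins down `exp(s(x,y;θ̄) - γ̄)`. -/

open Real Finset

noncomputable def binaryLogLik (a b t : ℝ) : ℝ := a * log t + b * log (1 - t)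

lemma mul_log_sub_log_le {w x y : ℝ} (hw : 0 ≤ w) (hx : 0 < x) (hy : 0 < y) :
    w * (log x - log y) ≤ w * (x / y - 1) := by
  rw [← log_div hx.ne' hy.ne']
  exact mul_le_mul_of_nonneg_left (log_le_sub_one_of_pos (div_pos hx hy)) hw

lemma mul_log_sub_log_lt {w x y : ℝ} (hw : 0 < w) (hx : 0 < x) (hy : 0 < y) (hne : x ≠ y) :
    w * (log x - log y) < w * (x / y - 1) := by
  rw [← log_div hx.ne' hy.ne']
  refine mul_lt_mul_of_pos_left (log_lt_sub_one_of_pos (div_pos hx hy) ?_) hw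
  rwa [Ne, div_eq_one_iff_eq hy.ne']

lemma binaryLogLik_lt {a b t : ℝ} (ha : 0 < a) (hb : 0 < b) (ht0 : 0 < t) (ht1 : t < 1)
    (hne : t ≠ a / (a + b)) :
    binaryLogLik a b t < binaryLogLik a b (a / (a + b)) := by
  have hab : 0 < a + b := add_pos ha hb
  have hcompl : 1 - a / (a + b) = b / (a + b) := by field_simp; ring
  have hlt := mul_log_sub_log_lt ha ht0 (div_pos ha hab) hne
  have hle := mul_log_sub_log_le hb.le (sub_pos.2 ht1) (div_pos hb hab)
  -- the two upper bounds add up to `t (a + b) - a + (1 - t) (a + b) - b = 0`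
  have hzero : a * (t / (a / (a + b)) - 1) + b * ((1 - t) / (b / (a + b)) - 1) = 0 := by
    field_simp
    ring
  rw [binaryLogLik, binaryLogLik, hcompl]
  linarith

lemma binaryLogLik_le {a b t : ℝ} (ha : 0 < a) (hb : 0 < b) (ht0 : 0 < t) (ht1 : t < 1) :
    binaryLogLik a b t ≤ binaryLogLik a b (a / (a + b)) := by
  rcases eq_or_ne t (a / (a + b)) with rfl | hne
  · exact le_rfl
  · exact (binaryLogLik_lt ha hb ht0 ht1 hne).le

lemma eq_of_div_add_eq_div_add {u v c : ℝ} (hc : 0 < c) (hu : 0 ≤ u) (hv : 0 ≤ v)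
    (h : u / (u + c) = v / (v + c)) : u = v := by
  rw [div_eq_div_iff (by positivity) (by positivity)] at h
  exact mul_right_cancel₀ hc.ne' (by linear_combination h)

lemma div_add_eq_of_mul_eq {u c d p : ℝ} (hd : 0 < d) (hp : u * d = p) :
    u / (u + c) = p / (p + c * d) := by
  rw [← hp, ← mul_div_mul_right _ _ hd.ne', add_mul]

lemma eq_of_sum_sum_eq_of_le {ι κ : Type*} [Fintype ι] [Fintype κ] {f f' : ι → κ → ℝ}
    (hle : ∀ i j, f i j ≤ f' i j) (heq : ∑ i, ∑ j, f i j = ∑ i, ∑ j, f' i j) (i : ι) (j : κ) :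
    f i j = f' i j :=
  (sum_eq_sum_iff_of_le fun j _ => hle i j).1
    ((sum_eq_sum_iff_of_le fun i _ => sum_le_sum fun j _ => hle i j).1 heq i (mem_univ i)) j
    (mem_univ j)

theorem binary_objective_consistency_general (X Y : Type) [Fintype X] [Fintype Y]
    (K : ℕ) (hK : 1 ≤ K)
    (Θ : Type) (θs : Θ) (γs : ℝ)
    (pX : X → ℝ) (hpX : ∀ x, 0 < pX x)
    (pN : Y → ℝ) (hpN : ∀ y, 0 < pN y)
    (s : X → Y → Θ → ℝ)
    (pXY : X → Y → ℝ)
    (hmodel : ∀ x y, pXY x y = pX x * Real.exp (s x y θs - γs))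
    (sb : X → Y → Θ → ℝ) (hsb : ∀ x y θ, sb x y θ = s x y θ - Real.log (pN y))
    (g : X → Y → Θ → ℝ → ℝ)
    (hg : ∀ x y θ γ, g x y θ γ
      = Real.exp (sb x y θ - γ) / (Real.exp (sb x y θ - γ) + K))
    (L : Θ → ℝ → ℝ)
    (hL : ∀ θ γ, L θ γ = ∑ x, ∑ y,
      (pXY x y * Real.log (g x y θ γ)
        + K * (pX x * pN y) * Real.log (1 - g x y θ γ))) :
    (∀ θ γ, L θ γ ≤ L θs γs) ∧
    (∀ θb γb, (∀ θ γ, L θ γ ≤ L θb γb) →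
      ∀ x y, Real.exp (s x y θb - γb) = Real.exp (s x y θs - γs)) := by
  have hKpos : (0 : ℝ) < K := by exact_mod_cast hK
  have ha x y : 0 < pXY x y := hmodel x y ▸ mul_pos (hpX x) (exp_pos _)
  have hb x y : (0 : ℝ) < K * (pX x * pN y) := mul_pos hKpos (mul_pos (hpX x) (hpN y))
  have hg_pos x y θ γ : 0 < g x y θ γ := hg x y θ γ ▸ div_pos (exp_pos _) (by positivity)
  have hg_lt_one x y θ γ : g x y θ γ < 1 := by
    rw [hg, div_lt_one (by positivity)]
    linarith
  have hscale x y : exp (sb x y θs - γs) * (pX x * pN y) = pXY x y := by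
    rw [hsb, hmodel, show s x y θs - log (pN y) - γs = s x y θs - γs - log (pN y) by ring,
      exp_sub, exp_log (hpN y)]
    field_simp [(hpN y).ne']
  have hg_star x y : g x y θs γs = pXY x y / (pXY x y + K * (pX x * pN y)) :=
    (hg x y θs γs).trans (div_add_eq_of_mul_eq (mul_pos (hpX x) (hpN y)) (hscale x y))
  have hL' θ γ : L θ γ = ∑ x, ∑ y, binaryLogLik (pXY x y) (K * (pX x * pN y)) (g x y θ γ) :=
    hL θ γ
  have hterm_le θ γ x y : binaryLogLik (pXY x y) (K * (pX x * pN y)) (g x y θ γ)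
      ≤ binaryLogLik (pXY x y) (K * (pX x * pN y)) (g x y θs γs) :=
    hg_star x y ▸ binaryLogLik_le (ha x y) (hb x y) (hg_pos x y θ γ) (hg_lt_one x y θ γ)
  have hL_le θ γ : L θ γ ≤ L θs γs := by
    rw [hL', hL']
    exact sum_le_sum fun x _ => sum_le_sum fun y _ => hterm_le θ γ x y
  refine ⟨hL_le, fun θb γb hmax x y => ?_⟩
  have hL_eq : L θb γb = L θs γs := le_antisymm (hL_le θb γb) (hmax θs γs)
  rw [hL', hL'] at hL_eq
  have hterm_eq := eq_of_sum_sum_eq_of_le (hterm_le θb γb) hL_eq x y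
  have hg_eq : g x y θb γb = g x y θs γs := by
    by_contra hne
    rw [hg_star] at hne hterm_eq
    exact (binaryLogLik_lt (ha x y) (hb x y) (hg_pos x y θb γb) (hg_lt_one x y θb γb) hne).ne
      hterm_eq
  rw [hg, hg] at hg_eq
  have hsb_eq := exp_injective (eq_of_div_add_eq_div_add hKpos (exp_pos _).le (exp_pos _).le hg_eq)
  rw [hsb, hsb] at hsb_eq
  congr 1
  linarith

/-- Under self-normalization `p(y|x) = exp(s(x,y;θ*) - γ*)`, the pair `(θ*, γ*)`
maximizes the population binary NCE objective, and any maximizer `(θ̄, γ̄)`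
satisfies `exp(s(x,y;θ̄) - γ̄) = p(y|x)` for all `x, y`. -/
theorem binary_objective_consistency (X Y : Type) [Fintype X] [Fintype Y]
    (K : ℕ) (hK : 1 ≤ K)
    (Θ : Type) (θs : Θ) (γs : ℝ)
    (pX : X → ℝ) (hpX : ∀ x, 0 < pX x) (hpXsum : ∑ x, pX x = 1)
    (pN : Y → ℝ) (hpN : ∀ y, 0 < pN y) (hpNsum : ∑ y, pN y = 1)
    (s : X → Y → Θ → ℝ)
    (pXY : X → Y → ℝ)
    (hmodel : ∀ x y, pXY x y = pX x * Real.exp (s x y θs - γs))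
    (sb : X → Y → Θ → ℝ) (hsb : ∀ x y θ, sb x y θ = s x y θ - Real.log (pN y))
    (g : X → Y → Θ → ℝ → ℝ)
    (hg : ∀ x y θ γ, g x y θ γ
      = Real.exp (sb x y θ - γ) / (Real.exp (sb x y θ - γ) + K))
    (L : Θ → ℝ → ℝ)
    (hL : ∀ θ γ, L θ γ = ∑ x, ∑ y,
      (pXY x y * Real.log (g x y θ γ)
        + K * (pX x * pN y) * Real.log (1 - g x y θ γ))) :
    (∀ θ γ, L θ γ ≤ L θs γs) ∧
    (∀ θb γb, (∀ θ γ, L θ γ ≤ L θb γb) →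
      ∀ x y, Real.exp (s x y θb - γb) = Real.exp (s x y θs - γs)) :=
  binary_objective_consistency_general X Y K hK Θ θs γs pX hpX pN hpN s pXY hmodel sb hsb g hg L hL
end

section
/- In the two-point counterexample, the stationary conditions of the population binary NCE objective force θ_1 = (1/4)e^γ and θ_2 = (7/12)e^γ, so any maximizer yields the estimated conditional ratio p̂(y_1|x_1)/p̂(y_2|x_1) = 3/7, which differs from the true ratio p(y_1|x_1)/p(y_2|x_1) = 1/3; hence binary NCE is inconsistent when the partition function depends on x. -/
/-!
For fixed `γ`, the objective splits as a sum of a term in `θ₁` and a term in `θ₂`. Each is a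
Bernoulli log-likelihood `p log u + q log (1 - u)` in `u = 2θ / (2θ + K e^γ)`, which by Gibbs'
inequality `log x ≤ x - 1` has the unique maximizer `u = p / (p + q)`; solving for `θ` gives
`θ₁ = e^γ / 4` and `θ₂ = 7 e^γ / 12`.
-/

open Real

lemma mul_log_add_mul_log_one_sub_lt {p q u : ℝ} (hp : 0 < p) (hq : 0 < q) (hu₀ : 0 < u)
    (hu₁ : u < 1) (hne : u ≠ p / (p + q)) :
    p * log u + q * log (1 - u) < p * log (p / (p + q)) + q * log (q / (p + q)) := by
  have hpq : 0 < p + q := by linarith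
  have hlog₁ : log (u / (p / (p + q))) < u / (p / (p + q)) - 1 :=
    log_lt_sub_one_of_pos (by positivity) fun h => hne (by
      rwa [div_eq_one_iff_eq (by positivity)] at h)
  have hlog₂ : log ((1 - u) / (q / (p + q))) ≤ (1 - u) / (q / (p + q)) - 1 :=
    log_le_sub_one_of_pos (div_pos (by linarith) (by positivity))
  rw [log_div hu₀.ne' (by positivity), div_div_eq_mul_div] at hlog₁
  rw [log_div (by linarith) (by positivity), div_div_eq_mul_div] at hlog₂
  have h₁ := mul_lt_mul_of_pos_left hlog₁ hp
  have h₂ := mul_le_mul_of_nonneg_left hlog₂ hq.le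
  rw [mul_sub, mul_sub, mul_div_cancel₀ _ hp.ne', mul_one] at h₁
  rw [mul_sub, mul_sub, mul_div_cancel₀ _ hq.ne', mul_one] at h₂
  linarith

/-- One of the two summands of the population binary NCE objective, with `c = K e^γ`. -/
noncomputable def nceTerm (a b c t : ℝ) : ℝ :=
  a * log (2 * t / (2 * t + c)) + b * log (c / (2 * t + c))

lemma eq_of_nceTerm_le {a b c s t : ℝ} (ha : 0 < a) (hb : 0 < b) (hc : 0 < c) (ht : 0 < t)
    (hs : 2 * b * s = a * c) (hle : nceTerm a b c s ≤ nceTerm a b c t) : t = s := by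
  have hs₀ : 0 < s := by nlinarith [mul_pos ha hc]
  have hu_s : 2 * s / (2 * s + c) = a / (a + b) := by
    rw [div_eq_div_iff (by positivity) (by positivity)]; linear_combination hs
  have hv_s : c / (2 * s + c) = b / (a + b) := by
    rw [div_eq_div_iff (by positivity) (by positivity)]; linear_combination -hs
  by_contra hne
  have hu : 2 * t / (2 * t + c) ≠ a / (a + b) := by
    rw [Ne, div_eq_div_iff (by positivity) (by positivity)]
    refine fun h => hne (mul_left_cancel₀ (by positivity : (2 * b) ≠ 0) ?_)
    linear_combination h - hs
  have hlt := mul_log_add_mul_log_one_sub_lt ha hb (by positivity)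
    ((div_lt_one (by positivity)).mpr (by linarith)) hu
  have hv_t : c / (2 * t + c) = 1 - 2 * t / (2 * t + c) := by field_simp; ring
  rw [← hv_t] at hlt
  unfold nceTerm at hle
  rw [hu_s, hv_s] at hle
  linarith

/-- Two-point counterexample: any maximizer of the population binary NCE objective
satisfies `θ₁ = e^γ/4` and `θ₂ = 7e^γ/12`, hence gives conditional ratio `3/7`,
which differs from the true ratio `1/3`. -/
theorem binary_nce_counterexample (K : ℕ) (hK : 1 ≤ K)
    (L : ℝ → ℝ → ℝ → ℝ)
    (hL : ∀ θ₁ θ₂ γ, L θ₁ θ₂ γ =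
      (1 / 8) * Real.log (2 * θ₁ / (2 * θ₁ + K * Real.exp γ))
      + ((K : ℝ) / 4) * Real.log (K * Real.exp γ / (2 * θ₁ + K * Real.exp γ))
      + (7 / 8) * Real.log (2 * θ₂ / (2 * θ₂ + K * Real.exp γ))
      + (3 * (K : ℝ) / 4) * Real.log (K * Real.exp γ / (2 * θ₂ + K * Real.exp γ)))
    (θ₁ θ₂ γ : ℝ) (hθ₁ : 0 < θ₁) (hθ₂ : 0 < θ₂)
    (hmax : ∀ t₁ t₂ g, 0 < t₁ → 0 < t₂ → L t₁ t₂ g ≤ L θ₁ θ₂ γ) :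
    θ₁ = Real.exp γ / 4 ∧ θ₂ = 7 * Real.exp γ / 12 ∧
    θ₁ / θ₂ = 3 / 7 ∧ (3 : ℝ) / 7 ≠ 1 / 3 := by
  have hK₀ : (0 : ℝ) < K := by exact_mod_cast hK
  have hc : 0 < (K : ℝ) * exp γ := by positivity
  have hsplit : ∀ t₁ t₂, L t₁ t₂ γ = nceTerm (1 / 8) (K / 4) (K * exp γ) t₁
      + nceTerm (7 / 8) (3 * K / 4) (K * exp γ) t₂ := fun t₁ t₂ => by
    rw [hL]; unfold nceTerm; ring
  have h₁ : θ₁ = exp γ / 4 := by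
    refine eq_of_nceTerm_le (a := 1 / 8) (b := K / 4) (by norm_num) (by positivity) hc hθ₁ (by ring) ?_
    have := hmax (exp γ / 4) θ₂ γ (by positivity) hθ₂
    rw [hsplit, hsplit] at this
    linarith
  have h₂ : θ₂ = 7 * exp γ / 12 := by
    refine eq_of_nceTerm_le (a := 7 / 8) (b := 3 * K / 4) (by norm_num) (by positivity) hc hθ₂ (by ring) ?_
    have := hmax θ₁ (7 * exp γ / 12) γ hθ₁ (by positivity)
    rw [hsplit, hsplit] at this
    linarith
  refine ⟨h₁, h₂, ?_, by norm_num⟩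
  rw [h₁, h₂]
  field_simp
  norm_num
end

section
/- Exchangeability identity for ranking NCE: for any symmetric function g(x, y_0,...,y_K) (invariant under permutations of y_0,...,y_K) and any f : X×Y → ℝ, E[Σ_{j=0}^K q(j|x,y_{0:K};θ*) f(x,y_j) g(x,y_{0:K})] = E[g(x,y_{0:K}) f(x,y_0)], where the expectation is over (x,y_{0:K}) ~ p_{X,Y}(x,y_0)∏_{j=1}^K p_N(y_j) and q is the posterior softmax at the true parameter. -/
/-- Exchangeability identity for ranking NCE: for any function `g` symmetric in
`(y₀, …, y_K)` and any `f : X × Y → ℝ`,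
`E[∑ⱼ q(j|x,y₀:K;θ*) f(x,y_j) g(x,y₀:K)] = E[g(x,y₀:K) f(x,y₀)]` under
`(x, y₀:K) ~ p_{X,Y}(x,y₀) ∏_{j≥1} p_N(y_j)`. -/
theorem ranking_exchangeability (X Y : Type) [Fintype X] [Fintype Y] (K : ℕ)
    (Θ : Type) (θs : Θ)
    (pX : X → ℝ) (hpX : ∀ x, 0 < pX x)
    (pN : Y → ℝ) (hpN : ∀ y, 0 < pN y)
    (s : X → Y → Θ → ℝ)
    (pXY : X → Y → ℝ)
    (hmodel : ∀ x y, pXY x y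
      = pX x * (Real.exp (s x y θs) / ∑ y', Real.exp (s x y' θs)))
    (sb : X → Y → Θ → ℝ) (hsb : ∀ x y θ, sb x y θ = s x y θ - Real.log (pN y))
    (q : Fin (K + 1) → X → (Fin (K + 1) → Y) → ℝ)
    (hq : ∀ i x ys, q i x ys
      = Real.exp (sb x (ys i) θs) / ∑ j, Real.exp (sb x (ys j) θs))
    (g : X → (Fin (K + 1) → Y) → ℝ)
    (hgsym : ∀ (x : X) (ys : Fin (K + 1) → Y) (π : Equiv.Perm (Fin (K + 1))),
      g x (ys ∘ π) = g x ys)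
    (f : X → Y → ℝ) :
    (∑ x, ∑ ys : Fin (K + 1) → Y,
      (pXY x (ys 0) * ∏ j ∈ Finset.univ.erase 0, pN (ys j)) *
        ((∑ j, q j x ys * f x (ys j)) * g x ys))
      = ∑ x, ∑ ys : Fin (K + 1) → Y,
          (pXY x (ys 0) * ∏ j ∈ Finset.univ.erase 0, pN (ys j)) *
            (g x ys * f x (ys 0)) := by
  rcases isEmpty_or_nonempty Y with hY | hY
  · simp
  have hexp : ∀ x y, Real.exp (sb x y θs) = Real.exp (s x y θs) / pN y := by
    intro x y; rw [hsb, Real.exp_sub, Real.exp_log (hpN y)]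
  have hSpos : ∀ x (ys : Fin (K+1) → Y), 0 < ∑ j, Real.exp (sb x (ys j) θs) :=
    fun x ys => Finset.sum_pos (fun j _ => Real.exp_pos _) Finset.univ_nonempty
  have hZpos : ∀ x, 0 < ∑ y', Real.exp (s x y' θs) :=
    fun x => Finset.sum_pos (fun j _ => Real.exp_pos _) Finset.univ_nonempty
  -- key pointwise identity
  have key : ∀ x (ys : Fin (K+1) → Y) (j : Fin (K+1)),
      (pXY x (ys 0) * ∏ k ∈ Finset.univ.erase 0, pN (ys k)) * q j x ys
      = (pXY x (ys j) * ∏ k ∈ Finset.univ.erase j, pN (ys k)) * q 0 x ys := by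
    intro x ys j
    have hP : (∏ k ∈ Finset.univ.erase 0, pN (ys k)) * pN (ys 0)
        = (∏ k ∈ Finset.univ.erase j, pN (ys k)) * pN (ys j) := by
      rw [Finset.prod_erase_mul _ _ (Finset.mem_univ (0 : Fin (K+1))),
        Finset.prod_erase_mul _ _ (Finset.mem_univ j)]
    have hsE : ∀ y, Real.exp (s x y θs) = Real.exp (sb x y θs) * pN y := by
      intro y; rw [hexp, div_mul_cancel₀ _ (hpN y).ne']
    rw [hq, hq, hmodel, hmodel, hsE (ys 0), hsE (ys j)]
    linear_combination (pX x * Real.exp (sb x (ys 0) θs) * Real.exp (sb x (ys j) θs)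
      / ((∑ y', Real.exp (s x y' θs)) * (∑ k, Real.exp (sb x (ys k) θs)))) * hP
  have hqsum : ∀ x ys, ∑ j, q j x ys = 1 := by
    intro x ys
    simp only [hq]
    rw [← Finset.sum_div, div_self (hSpos x ys).ne']
  -- swap argument
  have swap_sum : ∀ (x : X) (j : Fin (K+1)),
      (∑ ys : Fin (K+1) → Y, (pXY x (ys 0) * ∏ k ∈ Finset.univ.erase 0, pN (ys k)) *
          (q j x ys * f x (ys j) * g x ys))
      = ∑ ys : Fin (K+1) → Y, (pXY x (ys 0) * ∏ k ∈ Finset.univ.erase 0, pN (ys k)) *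
          (q j x ys * g x ys * f x (ys 0)) := by
    intro x j
    set σ : Equiv.Perm (Fin (K+1)) := Equiv.swap 0 j with hσ
    have e : (Fin (K+1) → Y) ≃ (Fin (K+1) → Y) := Equiv.arrowCongr σ (Equiv.refl Y)
    rw [← Equiv.sum_comp (Equiv.arrowCongr σ.symm (Equiv.refl Y))
      (fun ys => (pXY x (ys 0) * ∏ k ∈ Finset.univ.erase 0, pN (ys k)) *
          (q j x ys * f x (ys j) * g x ys))]
    apply Finset.sum_congr rfl
    intro ys _
    have hcomp : (Equiv.arrowCongr σ.symm (Equiv.refl Y)) ys = ys ∘ σ := by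
      funext k; simp [Equiv.arrowCongr]
    rw [hcomp]
    have h0 : (ys ∘ σ) 0 = ys j := by simp [hσ, Equiv.swap_apply_left]
    have hj : (ys ∘ σ) j = ys 0 := by simp [hσ, Equiv.swap_apply_right]
    have hprod : (∏ k ∈ Finset.univ.erase 0, pN ((ys ∘ σ) k))
        = ∏ k ∈ Finset.univ.erase j, pN (ys k) := by
      have h1 : pN ((ys ∘ σ) 0) * ∏ k ∈ Finset.univ.erase 0, pN ((ys ∘ σ) k)
          = ∏ k, pN ((ys ∘ σ) k) :=
        Finset.mul_prod_erase Finset.univ (fun k => pN ((ys ∘ σ) k))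
          (Finset.mem_univ (0 : Fin (K+1)))
      have h2 : ∏ k, pN ((ys ∘ σ) k) = ∏ k, pN (ys k) :=
        Equiv.prod_comp σ (fun k => pN (ys k))
      have h3 : pN (ys j) * ∏ k ∈ Finset.univ.erase j, pN (ys k)
          = ∏ k, pN (ys k) :=
        Finset.mul_prod_erase Finset.univ (fun k => pN (ys k)) (Finset.mem_univ j)
      apply mul_left_cancel₀ (hpN (ys j)).ne'
      rw [h3, ← h2, ← h1, h0]
    have hqswap : q j x (ys ∘ σ) = q 0 x ys := by
      rw [hq, hq, hj]
      congr 1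
      exact Equiv.sum_comp σ (fun k => Real.exp (sb x (ys k) θs))
    have hg : g x (ys ∘ σ) = g x ys := hgsym x ys σ
    rw [h0, hj, hprod, hqswap, hg]
    linear_combination (-(f x (ys 0) * g x ys)) * key x ys j
  -- assemble
  apply Finset.sum_congr rfl
  intro x _
  have lhs_eq : (∑ ys : Fin (K + 1) → Y,
      (pXY x (ys 0) * ∏ j ∈ Finset.univ.erase 0, pN (ys j)) *
        ((∑ j, q j x ys * f x (ys j)) * g x ys))
      = ∑ j, ∑ ys : Fin (K+1) → Y,
        (pXY x (ys 0) * ∏ k ∈ Finset.univ.erase 0, pN (ys k)) *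
          (q j x ys * f x (ys j) * g x ys) := by
    rw [Finset.sum_comm]
    apply Finset.sum_congr rfl
    intro ys _
    rw [Finset.sum_mul, Finset.mul_sum]
  have rhs_eq : (∑ ys : Fin (K + 1) → Y,
      (pXY x (ys 0) * ∏ j ∈ Finset.univ.erase 0, pN (ys j)) *
        (g x ys * f x (ys 0)))
      = ∑ j, ∑ ys : Fin (K+1) → Y,
        (pXY x (ys 0) * ∏ k ∈ Finset.univ.erase 0, pN (ys k)) *
          (q j x ys * g x ys * f x (ys 0)) := by
    rw [Finset.sum_comm]
    apply Finset.sum_congr rfl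
    intro ys _
    have : (∑ j, q j x ys) = 1 := hqsum x ys
    calc (pXY x (ys 0) * ∏ k ∈ Finset.univ.erase 0, pN (ys k)) * (g x ys * f x (ys 0))
        = (∑ j, q j x ys) * ((pXY x (ys 0) * ∏ k ∈ Finset.univ.erase 0, pN (ys k)) * (g x ys * f x (ys 0))) := by
          rw [this, one_mul]
      _ = _ := by rw [Finset.sum_mul]; apply Finset.sum_congr rfl; intro j _; ring
  rw [lhs_eq, rhs_eq]
  exact Finset.sum_congr rfl (fun j _ => swap_sum x j)
end
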